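/- For arbitrary positive costs c, let AND be the function with AND(a) = 1 if a i = true for all i and AND(a) = 0 otherwise, and let j₁,…,j_n list the indices in nondecreasing order of c i / (1 − p i). Then OPT(AND) = Σ_{t=1}^{n} c(j_t)·∏_{s<t} p(j_s); that is, the nonadaptive strategy querying bits in nondecreasing order of c i / (1 − p i) until a false bit is found (or all bits are queried) is optimal among all decision trees evaluating AND. -/
import Mathlib


open Finset

/-- Number of true bits of an assignment. -/
def N1 {n : ℕ} (a : Fin n → Bool) : ℕ :=
  (Finset.univ.filter (fun i => a i = true)).card

/-- Probability of an assignment. -/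
noncomputable def pr {n : ℕ} (p : Fin n → ℝ) (a : Fin n → Bool) : ℝ :=
  ∏ i, if a i then p i else 1 - p i
/-- Binary decision trees over `n` bits, with natural-number leaf labels. -/
inductive DTree (n : ℕ) : Type where
  | leaf : ℕ → DTree n
  | node : Fin n → DTree n → DTree n → DTree n

namespace DTree

/-- Output of the tree on assignment `a`. -/
def eval {n : ℕ} : DTree n → (Fin n → Bool) → ℕ
  | .leaf v, _ => v
  | .node i t0 t1, a => if a i then eval t1 a else eval t0 a

/-- Total cost of the queries made on assignment `a`. -/
noncomputable def cost {n : ℕ} (c : Fin n → ℝ) : DTree n → (Fin n → Bool) → ℝ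
  | .leaf _, _ => 0
  | .node i t0 t1, a => c i + (if a i then cost c t1 a else cost c t0 a)

/-- The list of indices queried on assignment `a`, in order. -/
def path {n : ℕ} : DTree n → (Fin n → Bool) → List (Fin n)
  | .leaf _, _ => []
  | .node i t0 t1, a => i :: (if a i then path t1 a else path t0 a)

/-- No index occurs twice on any root-to-leaf path (given already-used indices). -/
def Proper {n : ℕ} : DTree n → Finset (Fin n) → Prop
  | .leaf _, _ => True
  | .node i t0 t1, used =>
      i ∉ used ∧ Proper t0 (insert i used) ∧ Proper t1 (insert i used)

/-- Every root-to-leaf path queries all `n` indices (and no repeats). -/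
def Full {n : ℕ} : DTree n → Finset (Fin n) → Prop
  | .leaf _, used => used = Finset.univ
  | .node i t0 t1, used =>
      i ∉ used ∧ Full t0 (insert i used) ∧ Full t1 (insert i used)

end DTree
/-- Expected-cost-minimizing value over all decision trees evaluating `h`. -/
noncomputable def OPTcost {n : ℕ} (p c : Fin n → ℝ) (h : (Fin n → Bool) → ℕ) : ℝ :=
  sInf {x : ℝ | ∃ T : DTree n, T.Proper ∅ ∧ (∀ a, T.eval a = h a) ∧
    x = ∑ a : Fin n → Bool, T.cost c a * pr p a}

/-- `chainCost c q [j₁,…,jₘ] = Σ_t c jₜ · Π_{s<t} q jₛ`: expected cost of querying the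
listed bits in order, continuing past each bit with probability `q` of that bit. -/
noncomputable def chainCost {n : ℕ} (c q : Fin n → ℝ) : List (Fin n) → ℝ
  | [] => 0
  | i :: l => c i + q i * chainCost c q l

/-! ### Auxiliary definitions and lemmas -/

/-- Cost of querying the listed bits in order on assignment `a`, stopping at the first
false bit. -/
noncomputable def stopCost {n : ℕ} (c : Fin n → ℝ) (a : Fin n → Bool) : List (Fin n) → ℝ
  | [] => 0
  | i :: l => c i + if a i then stopCost c a l else 0

/-- The nonadaptive chain tree querying the listed bits in order. -/
def mkChain {n : ℕ} : List (Fin n) → DTree n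
  | [] => .leaf 1
  | i :: l => .node i (.leaf 0) (mkChain l)

section AuxLemmas

variable {n : ℕ} (p c : Fin n → ℝ)

lemma pr_nonneg (hp : ∀ i, 0 < p i ∧ p i < 1) (a : Fin n → Bool) : 0 ≤ pr p a := by
  apply Finset.prod_nonneg
  intro i _
  rcases hp i with ⟨h1, h2⟩
  by_cases h : a i <;> simp [h] <;> linarith

lemma sum_pr : ∑ a : Fin n → Bool, pr p a = 1 := by
  unfold pr
  rw [← Fintype.prod_sum (fun i (b : Bool) => if b then p i else 1 - p i)]
  rw [Finset.prod_eq_one]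
  intro i _
  simp [Fintype.sum_bool]

/-- Product of the probability factors over coordinates other than `i`. -/
noncomputable def prC {n : ℕ} (p : Fin n → ℝ) (i : Fin n) (a : Fin n → Bool) : ℝ :=
  ∏ j ∈ {i}ᶜ, if a j then p j else 1 - p j

lemma pr_update (i : Fin n) (a : Fin n → Bool) (b : Bool) :
    pr p (Function.update a i b) = (if b then p i else 1 - p i) * prC p i a := by
  unfold pr prC
  rw [Fintype.prod_eq_mul_prod_compl i]
  simp only [Function.update_self]
  congr 1
  apply Finset.prod_congr rfl
  intro j hj
  rw [Function.update_of_ne (by simpa using hj)]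

lemma prC_update (i : Fin n) (a : Fin n → Bool) (b : Bool) :
    prC p i (Function.update a i b) = prC p i a := by
  unfold prC
  apply Finset.prod_congr rfl
  intro j hj
  rw [Function.update_of_ne (by simpa using hj)]

/-- Conditioning on bit `i`: if `F` does not depend on coordinate `i`, then the
expectation of `F·[a i]` is `p i` times the expectation of `F`. -/
lemma sum_cond (i : Fin n)
    (F : (Fin n → Bool) → ℝ) (hF : ∀ a b, F (Function.update a i b) = F a) :
    ∑ a : Fin n → Bool, (if a i then F a else 0) * pr p a
      = p i * ∑ a : Fin n → Bool, F a * pr p a := by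
  classical
  have key : ∀ a : Fin n → Bool, a i = true → pr p a = p i * prC p i a := by
    intro a ha
    have : a = Function.update a i true := by rw [← ha]; simp
    rw [this, pr_update, prC_update]; simp
  have key' : ∀ a : Fin n → Bool, a i = false → pr p a = (1 - p i) * prC p i a := by
    intro a ha
    have : a = Function.update a i false := by rw [← ha]; simp
    rw [this, pr_update, prC_update]; simp
  have hsplit := Finset.sum_filter_add_sum_filter_not Finset.univ
      (fun a : Fin n → Bool => a i = true) (fun a => F a * pr p a)
  have hLHS : ∑ a : Fin n → Bool, (if a i then F a else 0) * pr p a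
      = ∑ a ∈ Finset.univ.filter (fun a : Fin n → Bool => a i = true), F a * pr p a := by
    rw [Finset.sum_filter]
    apply Finset.sum_congr rfl
    intro a _
    by_cases h : a i <;> simp [h]
  set W : ℝ := ∑ a ∈ Finset.univ.filter (fun a : Fin n → Bool => a i = true),
      F a * prC p i a with hW
  have h1 : ∑ a ∈ Finset.univ.filter (fun a : Fin n → Bool => a i = true), F a * pr p a
      = p i * W := by
    rw [hW, Finset.mul_sum]
    apply Finset.sum_congr rfl
    intro a ha
    rw [key a (by simpa using ha)]; ring
  have hbij : ∑ a ∈ Finset.univ.filter (fun a : Fin n → Bool => ¬ a i = true),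
      F a * prC p i a = W := by
    rw [hW]
    apply Finset.sum_nbij' (fun a => Function.update a i true) (fun a => Function.update a i false)
    · intro a ha; simp
    · intro a ha; simp
    · intro a ha
      simp only [Finset.mem_filter, Finset.mem_univ, true_and, Bool.not_eq_true] at ha
      rw [Function.update_idem, ← ha, Function.update_eq_self]
    · intro a ha
      simp only [Finset.mem_filter, Finset.mem_univ, true_and] at ha
      rw [Function.update_idem, ← ha, Function.update_eq_self]
    · intro a _
      rw [hF, prC_update]
  have h2 : ∑ a ∈ Finset.univ.filter (fun a : Fin n → Bool => ¬ a i = true), F a * pr p a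
      = (1 - p i) * W := by
    rw [← hbij, Finset.mul_sum]
    apply Finset.sum_congr rfl
    intro a ha
    simp only [Finset.mem_filter, Finset.mem_univ, true_and, Bool.not_eq_true] at ha
    rw [key' a ha]; ring
  rw [hLHS, h1, ← hsplit, h1, h2]
  ring

lemma stopCost_congr (a a' : Fin n → Bool) (l : List (Fin n))
    (h : ∀ j ∈ l, a j = a' j) : stopCost c a l = stopCost c a' l := by
  induction l with
  | nil => rfl
  | cons i l ih =>
    simp only [stopCost]
    rw [h i (by simp), ih (fun j hj => h j (by simp [hj]))]

/-- The expectation of `stopCost` over assignments is the `chainCost`. -/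
lemma sum_stopCost (l : List (Fin n)) (hl : l.Nodup) :
    ∑ a : Fin n → Bool, stopCost c a l * pr p a = chainCost c p l := by
  induction l with
  | nil => simp [stopCost, chainCost]
  | cons i l ih =>
    have hnd := hl
    rw [List.nodup_cons] at hnd
    simp only [stopCost, chainCost, add_mul]
    rw [Finset.sum_add_distrib]
    have h1 : ∑ a : Fin n → Bool, c i * pr p a = c i := by
      rw [← Finset.mul_sum, sum_pr p, mul_one]
    have h2 : ∑ a : Fin n → Bool, (if a i then stopCost c a l else 0) * pr p a
        = p i * chainCost c p l := by
      rw [sum_cond p i (fun a => stopCost c a l) ?_, ih hnd.2]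
      intro a b
      apply stopCost_congr
      intro j hj
      exact Function.update_of_ne (by rintro rfl; exact hnd.1 hj) _ _
    rw [h1, h2]

lemma cost_nonneg (hc : ∀ i, 0 < c i) (T : DTree n) (a : Fin n → Bool) :
    0 ≤ T.cost c a := by
  induction T with
  | leaf v => simp [DTree.cost]
  | node i t0 t1 ih0 ih1 =>
    simp only [DTree.cost]
    have := (hc i).le
    by_cases h : a i <;> simp [h] <;> linarith

/-- On any assignment, a tree's cost is at least the stopping cost along its
all-true path. -/
lemma cost_ge_stop (hc : ∀ i, 0 < c i) (T : DTree n) (a : Fin n → Bool) :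
    stopCost c a (T.path (fun _ => true)) ≤ T.cost c a := by
  induction T with
  | leaf v => simp [DTree.cost, DTree.path, stopCost]
  | node i t0 t1 ih0 ih1 =>
    by_cases h : a i
    · simp [DTree.cost, DTree.path, stopCost, h]
      linarith [ih1]
    · simp [DTree.cost, DTree.path, stopCost, h]
      linarith [cost_nonneg c hc t0 a]

lemma path_nodup_avoid (T : DTree n) (used : Finset (Fin n)) (hT : T.Proper used)
    (a : Fin n → Bool) :
    (T.path a).Nodup ∧ ∀ j ∈ T.path a, j ∉ used := by
  induction T generalizing used with
  | leaf v => simp [DTree.path]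
  | node i t0 t1 ih0 ih1 =>
    obtain ⟨hi, h0, h1⟩ := hT
    by_cases h : a i
    · obtain ⟨hn, hv⟩ := ih1 (insert i used) h1
      refine ⟨?_, ?_⟩
      · simp only [DTree.path, h, if_true, List.nodup_cons]
        exact ⟨fun hmem => hv i hmem (Finset.mem_insert_self i used), hn⟩
      · intro j hj
        simp only [DTree.path, h, if_true, List.mem_cons] at hj
        rcases hj with rfl | hj
        · exact hi
        · exact fun hju => hv j hj (Finset.mem_insert_of_mem hju)
    · obtain ⟨hn, hv⟩ := ih0 (insert i used) h0
      refine ⟨?_, ?_⟩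
      · simp only [DTree.path, h, if_false, List.nodup_cons]
        exact ⟨fun hmem => hv i hmem (Finset.mem_insert_self i used), hn⟩
      · intro j hj
        simp only [DTree.path, h, if_false, List.mem_cons] at hj
        rcases hj with rfl | hj
        · exact hi
        · exact fun hju => hv j hj (Finset.mem_insert_of_mem hju)

/-- A tree's output depends only on the values along the queried path. -/
lemma eval_congr (T : DTree n) (a a' : Fin n → Bool)
    (h : ∀ j ∈ T.path a, a j = a' j) : T.eval a' = T.eval a := by
  induction T with
  | leaf v => rfl
  | node i t0 t1 ih0 ih1 =>
    have hi : a i = a' i := h i (by simp [DTree.path])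
    by_cases hb : a i
    · have hb' : a' i = true := by rw [← hi]; exact hb
      simp only [DTree.eval, hb, hb', if_true]
      exact ih1 (fun j hj => h j (by simp [DTree.path, hb, hj]))
    · have hb' : a' i = false := by rw [← hi]; simpa using hb
      simp only [DTree.eval, hb, hb', if_false, Bool.false_eq_true]
      exact ih0 (fun j hj => h j (by simp [DTree.path, hb, hj]))

/-- A tree computing AND must query every index on the all-true path. -/
lemma path_complete (T : DTree n)
    (heval : ∀ a, T.eval a = if ∀ i, a i = true then 1 else 0) (i : Fin n) :
    i ∈ T.path (fun _ => true) := by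
  by_contra hmem
  have h := eval_congr T (fun _ => true) (Function.update (fun _ => true) i false)
    (fun j hj => (Function.update_of_ne (show j ≠ i by rintro rfl; exact hmem hj)
      false (fun _ => true)).symm)
  rw [heval, heval] at h
  simp only [implies_true, if_pos] at h
  split_ifs at h with hcond
  · simpa using hcond i

/-- Bubbling a minimal-ratio element to the front does not increase the chain cost. -/
lemma chainCost_bubble (hp : ∀ i, 0 < p i ∧ p i < 1)
    (j : Fin n) :
    ∀ m : List (Fin n), j ∈ m → (∀ k ∈ m, c j / (1 - p j) ≤ c k / (1 - p k)) →
    chainCost c p (j :: m.erase j) ≤ chainCost c p m := by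
  intro m
  induction m with
  | nil => intro h; simp at h
  | cons k m' ih =>
    intro hj hmin
    by_cases hk : j = k
    · subst hk
      simp [List.erase_cons_head]
    · have hjm : j ∈ m' := by
        rcases List.mem_cons.mp hj with h | h
        · exact absurd h hk
        · exact h
      have herase : (k :: m').erase j = k :: m'.erase j := by
        rw [List.erase_cons_tail]
        simp [hk]
        intro h; exact hk h.symm
      rw [herase]
      have ihm := ih hjm (fun k' hk' => hmin k' (List.mem_cons_of_mem _ hk'))
      simp only [chainCost]
      have hpk := hp k
      have hpj := hp j
      have hratio : c j / (1 - p j) ≤ c k / (1 - p k) := hmin k (by simp)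
      have hineq : c j * (1 - p k) ≤ c k * (1 - p j) := by
        rw [div_le_div_iff₀ (by linarith) (by linarith)] at hratio
        exact hratio
      have h1 : p k * chainCost c p (j :: m'.erase j) ≤ p k * chainCost c p m' :=
        mul_le_mul_of_nonneg_left ihm (le_of_lt hpk.1)
      simp only [chainCost] at h1
      nlinarith [h1, hineq, hpj.1, hpk.1]

/-- A list sorted by the ratio `c i / (1 - p i)` minimizes the chain cost among
its permutations. -/
lemma chainCost_sorted_le (hp : ∀ i, 0 < p i ∧ p i < 1) :
    ∀ l m : List (Fin n),
    l.Pairwise (fun i j => c i / (1 - p i) ≤ c j / (1 - p j)) → m.Perm l →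
    chainCost c p l ≤ chainCost c p m := by
  intro l
  induction l with
  | nil =>
    intro m _ hperm
    rw [List.perm_nil] at hperm
    subst hperm
    exact le_refl _
  | cons j l' ih =>
    intro m hsort hperm
    rw [List.pairwise_cons] at hsort
    have hjm : j ∈ m := hperm.mem_iff.mpr (by simp)
    have hmin : ∀ k ∈ m, c j / (1 - p j) ≤ c k / (1 - p k) := by
      intro k hk
      rcases List.mem_cons.mp (hperm.mem_iff.mp hk) with rfl | hk'
      · exact le_refl _
      · exact hsort.1 k hk'
    have hbub := chainCost_bubble p c hp j m hjm hmin
    have hper' : (m.erase j).Perm l' := by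
      have := hperm.erase j
      rwa [List.erase_cons_head] at this
    have hih := ih (m.erase j) hsort.2 hper'
    calc chainCost c p (j :: l') = c j + p j * chainCost c p l' := rfl
      _ ≤ c j + p j * chainCost c p (m.erase j) := by
          have := mul_le_mul_of_nonneg_left hih (le_of_lt (hp j).1)
          linarith
      _ = chainCost c p (j :: m.erase j) := rfl
      _ ≤ chainCost c p m := hbub

lemma mkChain_cost (l : List (Fin n)) (a : Fin n → Bool) :
    (mkChain l).cost c a = stopCost c a l := by
  induction l with
  | nil => simp [mkChain, DTree.cost, stopCost]
  | cons i l ih =>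
    simp only [mkChain, DTree.cost, stopCost]
    by_cases h : a i <;> simp [h, ih]

lemma mkChain_eval (l : List (Fin n)) (a : Fin n → Bool) :
    (mkChain l).eval a = if ∀ i ∈ l, a i = true then 1 else 0 := by
  induction l with
  | nil => simp [mkChain, DTree.eval]
  | cons i l ih =>
    simp only [mkChain, DTree.eval, ih]
    by_cases h : a i
    · simp [h]
    · simp [h]

lemma mkChain_proper (l : List (Fin n)) (used : Finset (Fin n))
    (hl : l.Nodup) (hd : ∀ i ∈ l, i ∉ used) : (mkChain l).Proper used := by
  induction l generalizing used with
  | nil => trivial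
  | cons i l ih =>
    rw [List.nodup_cons] at hl
    refine ⟨hd i (by simp), trivial, ?_⟩
    apply ih (insert i used) hl.2
    intro j hj
    intro hju
    rcases Finset.mem_insert.mp hju with rfl | hju'
    · exact hl.1 hj
    · exact hd j (by simp [hj]) hju'

end AuxLemmas

theorem stmt14 {n : ℕ} (hn : 1 ≤ n) (p c : Fin n → ℝ)
    (hp : ∀ i, 0 < p i ∧ p i < 1) (hc : ∀ i, 0 < c i)
    (l : List (Fin n))
    (hl : l.Nodup ∧ (∀ i, i ∈ l) ∧
      l.Pairwise (fun i j => c i / (1 - p i) ≤ c j / (1 - p j))) :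
    OPTcost p c (fun a => if ∀ i, a i = true then 1 else 0) =
      chainCost c p l := by
  obtain ⟨hnd, hmem, hsort⟩ := hl
  set S := {x : ℝ | ∃ T : DTree n, T.Proper ∅ ∧
    (∀ a, T.eval a = (fun a => if ∀ i, a i = true then 1 else 0) a) ∧
    x = ∑ a : Fin n → Bool, T.cost c a * pr p a} with hS
  have hmemS : chainCost c p l ∈ S := by
    refine ⟨mkChain l, mkChain_proper l ∅ hnd (by simp), ?_, ?_⟩
    · intro a
      rw [mkChain_eval]
      simp only
      congr 1
      simp only [eq_iff_iff]
      constructor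
      · intro h i; exact h i (hmem i)
      · intro h i _; exact h i
    · rw [← sum_stopCost p c l hnd]
      apply Finset.sum_congr rfl
      intro a _
      rw [mkChain_cost]
  have hlb : ∀ x ∈ S, chainCost c p l ≤ x := by
    rintro x ⟨T, hprop, heval, rfl⟩
    set π := T.path (fun _ => true) with hπ
    have hπnd : π.Nodup := (path_nodup_avoid T ∅ hprop _).1
    have hπmem : ∀ i, i ∈ π := path_complete T heval
    have hperm : π.Perm l := by
      rw [List.perm_ext_iff_of_nodup hπnd hnd]
      intro i
      simp [hπmem i, hmem i]
    have step1 : chainCost c p l ≤ chainCost c p π :=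
      chainCost_sorted_le p c hp l π hsort hperm
    have step2 : chainCost c p π ≤ ∑ a : Fin n → Bool, T.cost c a * pr p a := by
      rw [← sum_stopCost p c π hπnd]
      apply Finset.sum_le_sum
      intro a _
      exact mul_le_mul_of_nonneg_right (cost_ge_stop c hc T a) (pr_nonneg p hp a)
    linarith
  unfold OPTcost
  rw [← hS]
  exact le_antisymm (csInf_le ⟨chainCost c p l, hlb⟩ hmemS)
    (le_csInf ⟨chainCost c p l, hmemS⟩ hlb)
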